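/- Let G be a totally disconnected locally compact group, φ : G → G a topological automorphism, and U an open compact subgroup. For n ≥ 1 let Cₙ(φ,U) = ⋂_{i=0}^{n-1} φ^{-i}(U) and αₙ = [Cₙ(φ,U) : C_{n+1}(φ,U)]. Then α_{n+1} ≤ αₙ for every n ≥ 1; consequently the sequence (αₙ) is eventually constant. -/

import Mathlib

open Filter Topology

variable {G : Type*} [Group G]

/-- The `n`-th `φ`-cotrajectory `Cₙ(φ,U) = ⋂_{i<n} φ^{-i}(U)`. -/
def cotrajN (φ : MulAut G) (U : Subgroup G) (n : ℕ) : Subgroup G :=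
  ⨅ i ∈ Finset.range n, Subgroup.comap (φ ^ i).toMonoidHom U

/-!
The recursion `Cₙ₊₁ = U ∩ φ⁻¹(Cₙ)` does all the work. Since `Cₙ₊₁ ≤ U`, intersecting with `U`
in `Cₙ₊₂ = U ∩ φ⁻¹(Cₙ₊₁)` does not change the index in `Cₙ₊₁`, so
`αₙ₊₁ = [Cₙ₊₁ : φ⁻¹Cₙ₊₁] ≤ [φ⁻¹Cₙ : φ⁻¹Cₙ₊₁] = αₙ`, the inequality holding because `Cₙ₊₁ ≤ φ⁻¹Cₙ`
and `αₙ` is finite: for `n ≥ 1`, `Cₙ₊₁` is an open subgroup of the compact group `Cₙ`.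
A positive antitone sequence of naturals is eventually constant.
-/

lemma Subgroup.relIndex_ne_zero_of_isOpen_of_isCompact [TopologicalSpace G]
    [IsTopologicalGroup G] {H K : Subgroup G} (hH : IsOpen (H : Set G))
    (hK : IsCompact (K : Set G)) : H.relIndex K ≠ 0 := by
  have : CompactSpace K := isCompact_iff_compactSpace.mp hK
  have : Finite (K ⧸ H.subgroupOf K) :=
    Subgroup.quotient_finite_of_isOpen _ (hH.preimage continuous_subtype_val)
  exact Subgroup.index_ne_zero_of_finite

section cotrajN

variable (φ : MulAut G) (U : Subgroup G)

lemma mem_cotrajN {n : ℕ} {x : G} : x ∈ cotrajN φ U n ↔ ∀ i < n, (φ ^ i) x ∈ U := by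
  simp [cotrajN, Subgroup.mem_iInf, Subgroup.mem_comap]

@[simp]
lemma cotrajN_zero : cotrajN φ U 0 = ⊤ := by
  simp [cotrajN]

lemma cotrajN_succ (n : ℕ) :
    cotrajN φ U (n + 1) = U ⊓ (cotrajN φ U n).comap φ.toMonoidHom := by
  ext x
  simp only [mem_cotrajN, Subgroup.mem_inf, Subgroup.mem_comap, MulEquiv.coe_toMonoidHom,
    ← MulAut.mul_apply, ← pow_succ]
  constructor
  · intro h
    exact ⟨by simpa using h 0 n.succ_pos, fun i hi => h (i + 1) (by omega)⟩
  · rintro ⟨h0, h⟩ (_ | i) hi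
    · simpa using h0
    · exact h i (by omega)

lemma cotrajN_le {n : ℕ} (hn : n ≠ 0) : cotrajN φ U n ≤ U := by
  obtain ⟨m, rfl⟩ := Nat.exists_eq_succ_of_ne_zero hn
  rw [cotrajN_succ]
  exact inf_le_left

lemma cotrajN_succ_le_comap (n : ℕ) :
    cotrajN φ U (n + 1) ≤ (cotrajN φ U n).comap φ.toMonoidHom := by
  rw [cotrajN_succ]
  exact inf_le_right

lemma relIndex_cotrajN_succ_succ_le {n : ℕ}
    (hfin : (cotrajN φ U (n + 1)).relIndex (cotrajN φ U n) ≠ 0) :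
    (cotrajN φ U (n + 2)).relIndex (cotrajN φ U (n + 1)) ≤
      (cotrajN φ U (n + 1)).relIndex (cotrajN φ U n) := by
  have hcomap : ((cotrajN φ U (n + 1)).comap φ.toMonoidHom).relIndex
      ((cotrajN φ U n).comap φ.toMonoidHom) =
        (cotrajN φ U (n + 1)).relIndex (cotrajN φ U n) := by
    rw [Subgroup.relIndex_comap, Subgroup.map_comap_eq_self_of_surjective φ.surjective]
  calc (cotrajN φ U (n + 2)).relIndex (cotrajN φ U (n + 1))
      = ((cotrajN φ U (n + 1)).comap φ.toMonoidHom).relIndex (cotrajN φ U (n + 1)) := by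
        rw [cotrajN_succ φ U (n + 1), ← Subgroup.inf_relIndex_right, inf_right_comm,
          inf_eq_right.mpr (cotrajN_le φ U n.add_one_ne_zero), Subgroup.inf_relIndex_left]
    _ ≤ ((cotrajN φ U (n + 1)).comap φ.toMonoidHom).relIndex
          ((cotrajN φ U n).comap φ.toMonoidHom) :=
        Subgroup.relIndex_le_of_le_right (cotrajN_succ_le_comap φ U n) (hcomap ▸ hfin)
    _ = (cotrajN φ U (n + 1)).relIndex (cotrajN φ U n) := hcomap

variable [TopologicalSpace G] {φ U}

lemma isOpen_cotrajN (hφ : Continuous φ) (hU : IsOpen (U : Set G)) (n : ℕ) :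
    IsOpen (cotrajN φ U n : Set G) := by
  induction n with
  | zero => simp
  | succ n ih =>
    rw [cotrajN_succ]
    exact hU.inter (ih.preimage hφ)

variable [IsTopologicalGroup G]

lemma isCompact_cotrajN (hφ : Continuous φ) (hUo : IsOpen (U : Set G))
    (hUc : IsCompact (U : Set G)) {n : ℕ} (hn : n ≠ 0) : IsCompact (cotrajN φ U n : Set G) :=
  hUc.of_isClosed_subset (Subgroup.isClosed_of_isOpen _ (isOpen_cotrajN hφ hUo n))
    (cotrajN_le φ U hn)

lemma relIndex_cotrajN_succ_ne_zero (hφ : Continuous φ) (hUo : IsOpen (U : Set G))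
    (hUc : IsCompact (U : Set G)) {n : ℕ} (hn : n ≠ 0) :
    (cotrajN φ U (n + 1)).relIndex (cotrajN φ U n) ≠ 0 :=
  Subgroup.relIndex_ne_zero_of_isOpen_of_isCompact (isOpen_cotrajN hφ hUo _)
    (isCompact_cotrajN hφ hUo hUc hn)

end cotrajN

theorem alpha_antitone_and_eventually_const_general [TopologicalSpace G] [IsTopologicalGroup G]
    (φ : MulAut G) (hφ : Continuous φ)
    (U : Subgroup G) (hUo : IsOpen (U : Set G)) (hUc : IsCompact (U : Set G))
    (α : ℕ → ℕ) (hα : ∀ n, α n = (cotrajN φ U (n + 1)).relIndex (cotrajN φ U n)) :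
    (∀ n : ℕ, 1 ≤ n → α (n + 1) ≤ α n) ∧
      ∃ n₀ : ℕ, 1 ≤ n₀ ∧ ∃ a : ℕ, 0 < a ∧ ∀ n ≥ n₀, α n = a := by
  have hfin : ∀ n, 1 ≤ n → (cotrajN φ U (n + 1)).relIndex (cotrajN φ U n) ≠ 0 :=
    fun n hn => relIndex_cotrajN_succ_ne_zero hφ hUo hUc (by omega)
  have hpos : ∀ n, 1 ≤ n → 0 < α n := fun n hn => hα n ▸ Nat.pos_of_ne_zero (hfin n hn)
  have hanti : ∀ n, 1 ≤ n → α (n + 1) ≤ α n := fun n hn => by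
    simpa only [hα] using relIndex_cotrajN_succ_succ_le φ U (hfin n hn)
  obtain ⟨k, hk⟩ := WellFoundedLT.antitone_chain_condition (f := fun k => α (k + 1))
    (antitone_nat_of_succ_le fun k => hanti (k + 1) (by omega))
  refine ⟨hanti, k + 1, by omega, α (k + 1), hpos _ (by omega), fun n hn => ?_⟩
  obtain ⟨m, rfl⟩ := Nat.exists_eq_add_of_le' (by omega : 1 ≤ n)
  exact (hk m (by omega)).symm

theorem alpha_antitone_and_eventually_const [TopologicalSpace G] [IsTopologicalGroup G]
    [LocallyCompactSpace G] [TotallyDisconnectedSpace G]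
    (φ : MulAut G) (hφ : Continuous φ) (hφ' : Continuous φ⁻¹)
    (U : Subgroup G) (hUo : IsOpen (U : Set G)) (hUc : IsCompact (U : Set G))
    (α : ℕ → ℕ) (hα : ∀ n, α n = (cotrajN φ U (n + 1)).relIndex (cotrajN φ U n)) :
    (∀ n : ℕ, 1 ≤ n → α (n + 1) ≤ α n) ∧
      ∃ n₀ : ℕ, 1 ≤ n₀ ∧ ∃ a : ℕ, 0 < a ∧ ∀ n ≥ n₀, α n = a :=
  alpha_antitone_and_eventually_const_general φ hφ U hUo hUc α hα
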